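/- arXiv:1610.07858 — 4 statements merged into one kernel-verified Lean document; each statement's English description precedes it below -/
import Mathlib

section
/- Let G = (S₀, S₁, E) be a finite weighted game, s_init ∈ S an initial state, and t ∈ ℚ (t ≥ 0) a threshold. Player P₀ has a winning strategy in G from s_init for the objective AEL(t) = EGL ∩ AE(t) if, and only if, P₀ has a winning strategy in the expanded infinite-state game G' from the configuration (s_init, 0) for the mean-payoff objective MP(t) = {π : MPsup(π) ≤ t}. -/
namespace AvgEnergy

/-- An integer-weighted edge over a state space `α`. -/
abbrev WEdge (α : Type*) : Type _ := α × ℤ × α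

/-- A finite turn-based weighted game `G = (S₀, S₁, E)`:
`S₀` and `S₁` are disjoint sets of states covering `S`, edges carry integer
weights bounded in absolute value by `W`, and every state has an outgoing edge. -/
structure Game (S : Type*) where
  S0 : Set S
  S1 : Set S
  E : Set (WEdge S)
  W : ℕ
  disj : Disjoint S0 S1
  cover : S0 ∪ S1 = Set.univ
  wbound : ∀ e ∈ E, -(W : ℤ) ≤ e.2.1 ∧ e.2.1 ≤ (W : ℤ)
  total : ∀ s : S, ∃ w s', (s, w, s') ∈ E

variable {α : Type*}

/-- A play from `s`: an infinite sequence of consecutive edges of `E` starting at `s`. -/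
def IsPlay (E : Set (WEdge α)) (s : α) (π : ℕ → WEdge α) : Prop :=
  (∀ i, π i ∈ E) ∧ (π 0).1 = s ∧ ∀ i, (π i).2.2 = (π (i + 1)).1

/-- Energy level of the length-`n` prefix of `π`. -/
def EL (π : ℕ → WEdge α) (n : ℕ) : ℤ :=
  ∑ i ∈ Finset.range n, (π i).2.1

/-- Mean-payoff of the length-`n` prefix of `π`. -/
def MP (π : ℕ → WEdge α) (n : ℕ) : ℚ := (EL π n : ℚ) / n

/-- Average-energy of the length-`n` prefix of `π`. -/
def AE (π : ℕ → WEdge α) (n : ℕ) : ℚ :=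
  (∑ i ∈ Finset.range n, (EL π (i + 1) : ℚ)) / n

/-- `limsup_{n → ∞} f n ≤ t` (ε-characterization, valid in `ℚ`). -/
def LimsupLE (f : ℕ → ℚ) (t : ℚ) : Prop :=
  ∀ ε : ℚ, 0 < ε → ∃ N, ∀ n ≥ N, f n ≤ t + ε

/-- The state reached after following the finite prefix `ρ` from `s`. -/
def EndSt (s : α) (ρ : List (WEdge α)) : α :=
  (ρ.getLast?.map (fun e => e.2.2)).getD s

/-- `ρ` is a finite play prefix from `s` in the graph with edge set `E`. -/
def IsPrefixFrom (E : Set (WEdge α)) (s : α) (ρ : List (WEdge α)) : Prop :=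
  (∀ e ∈ ρ, e ∈ E) ∧ List.Chain' (fun e f => e.2.2 = f.1) ρ ∧
    ∀ e, ρ.head? = some e → e.1 = s

/-- A strategy (of the player owning the states in `S0`) from `s`: it assigns to every
play prefix from `s` ending in a state of `S0` a valid outgoing edge. -/
def IsStrategy (E : Set (WEdge α)) (S0 : Set α) (s : α)
    (σ : List (WEdge α) → WEdge α) : Prop :=
  ∀ ρ, IsPrefixFrom E s ρ → EndSt s ρ ∈ S0 → σ ρ ∈ E ∧ (σ ρ).1 = EndSt s ρ

/-- The length-`n` prefix of a play, as a list of edges. -/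
def Pref (π : ℕ → WEdge α) (n : ℕ) : List (WEdge α) :=
  List.ofFn (fun i : Fin n => π i)

/-- `π` is an outcome of the strategy `σ` (for the player owning `S0`) from `s`. -/
def IsOutcome (E : Set (WEdge α)) (S0 : Set α) (s : α)
    (σ : List (WEdge α) → WEdge α) (π : ℕ → WEdge α) : Prop :=
  IsPlay E s π ∧ ∀ n, EndSt s (Pref π n) ∈ S0 → π n = σ (Pref π n)

/-- Configurations of the expanded game: `⊥` is `none`. -/
abbrev Conf (S : Type*) := Option (S × ℕ)

/-- Edges of the expanded infinite-state weighted game `G'`: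
`((s,c), c', (s',c'))` whenever `(s,w,s') ∈ E` and `c' = c + w ≥ 0`;
`((s,c), ⌈t⌉+1, ⊥)` whenever some `(s,w,s') ∈ E` has `c + w < 0`; and
`(⊥, ⌈t⌉+1, ⊥)`. -/
def ExpE {S : Type*} (G : Game S) (t : ℚ) : Set (WEdge (Conf S)) :=
  {e | (∃ (s : S) (c : ℕ) (w : ℤ) (s' : S) (c' : ℕ), (s, w, s') ∈ G.E ∧ (c : ℤ) + w = (c' : ℤ) ∧
          e = (some (s, c), (c' : ℤ), some (s', c'))) ∨
       (∃ (s : S) (c : ℕ) (w : ℤ) (s' : S), (s, w, s') ∈ G.E ∧ (c : ℤ) + w < 0 ∧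
          e = (some (s, c), ⌈t⌉ + 1, (none : Conf S))) ∨
       e = ((none : Conf S), ⌈t⌉ + 1, (none : Conf S))}

/-- The configurations of the expanded game belonging to player `P₀`. -/
def ExpS0 {S : Type*} (G : Game S) : Set (Conf S) :=
  {γ | ∃ s c, s ∈ G.S0 ∧ γ = some (s, c)}

/-- The state (configuration) visited at position `n` along a play from `s`:
`γ₀ = s` and `γ_{n+1}` is the target of the `(n+1)`-st edge. -/
def StAt (s : α) (π : ℕ → WEdge α) : ℕ → α
  | 0 => s
  | n + 1 => (π n).2.2

end AvgEnergy

/-!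
A configuration `(s, c)` of `G'` records the current state of a play of `G` together with its
energy level, so plays of `G` whose energy stays nonnegative correspond to plays of `G'` that avoid
`⊥`, and the weight of each edge of `G'` is the energy level reached in `G`: the mean-payoff of the
lifted play is the average-energy of the original one. Strategies are transported along this
correspondence in both directions. A strategy winning `AEL(t)` never lets the energy become
negative, as otherwise one of its outcomes would; dually, a strategy winning `MP(t)` in `G'` never
lets `⊥` be reached, since from `⊥` on every weight is `⌈t⌉ + 1 > t`.
-/

namespace AvgEnergy

section Plays

variable {α : Type*}

lemma Pref_succ (π : ℕ → WEdge α) (n : ℕ) : Pref π (n + 1) = Pref π n ++ [π n] := by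
  rw [Pref, List.ofFn_succ', List.concat_eq_append]
  rfl

lemma Pref_length (π : ℕ → WEdge α) (n : ℕ) : (Pref π n).length = n :=
  List.length_ofFn

lemma Pref_congr {π π' : ℕ → WEdge α} {n : ℕ} (h : ∀ i < n, π i = π' i) :
    Pref π n = Pref π' n :=
  congrArg List.ofFn (funext fun i => h i i.2)

lemma StAt_congr {s : α} {π π' : ℕ → WEdge α} {n : ℕ} (h : ∀ i < n, π i = π' i) :
    StAt s π n = StAt s π' n := by
  cases n with
  | zero => rfl
  | succ n => simp [StAt, h n n.lt_succ_self]

lemma EL_succ (π : ℕ → WEdge α) (n : ℕ) : EL π (n + 1) = EL π n + (π n).2.1 :=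
  Finset.sum_range_succ _ _

lemma EL_congr {π π' : ℕ → WEdge α} {n : ℕ} (h : ∀ i < n, π i = π' i) : EL π n = EL π' n :=
  Finset.sum_congr rfl fun i hi => by rw [h i (Finset.mem_range.1 hi)]

lemma EndSt_Pref (s : α) (π : ℕ → WEdge α) (n : ℕ) : EndSt s (Pref π n) = StAt s π n := by
  cases n with
  | zero => rfl
  | succ n => simp [Pref_succ, EndSt, StAt]

lemma IsPlay.fst_eq_StAt {E : Set (WEdge α)} {s : α} {π : ℕ → WEdge α} (h : IsPlay E s π)
    (n : ℕ) : (π n).1 = StAt s π n := by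
  cases n with
  | zero => exact h.2.1
  | succ n => exact (h.2.2 n).symm

lemma isPrefixFrom_Pref {E : Set (WEdge α)} {s : α} {π : ℕ → WEdge α} {n : ℕ}
    (h : ∀ k < n, π k ∈ E ∧ (π k).1 = StAt s π k) : IsPrefixFrom E s (Pref π n) := by
  refine ⟨?_, ?_, ?_⟩
  · simp only [Pref, List.mem_ofFn]
    rintro _ ⟨i, rfl⟩
    exact (h i i.2).1
  · refine List.isChain_ofFn.2 fun i hi => ?_
    exact ((h (i + 1) hi).2).symm
  · cases n with
    | zero => simp [Pref]
    | succ n =>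
      simp only [Pref, List.ofFn_succ, List.head?_cons, Option.some_inj]
      rintro _ rfl
      exact (h 0 n.succ_pos).2

lemma exists_eq_of_Pref (g : ℕ → List (WEdge α) → WEdge α) :
    ∃ π : ℕ → WEdge α, ∀ k, π k = g k (Pref π k) := by
  let L : ℕ → List (WEdge α) := fun k => Nat.rec [] (fun k l => l ++ [g k l]) k
  refine ⟨fun k => g k (L k), fun k => ?_⟩
  suffices h : ∀ k, Pref (fun k => g k (L k)) k = L k by rw [h]
  intro k
  induction k with
  | zero => rfl
  | succ k ih => rw [Pref_succ, ih]

end Plays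

section Outcomes

def IsConsistentAt {α : Type*} (E : Set (WEdge α)) (S0 : Set α) (s : α)
    (σ : List (WEdge α) → WEdge α) (π : ℕ → WEdge α) (k : ℕ) : Prop :=
  π k ∈ E ∧ (π k).1 = StAt s π k ∧ (StAt s π k ∈ S0 → π k = σ (Pref π k))

variable {α : Type*} {E : Set (WEdge α)} {S0 : Set α} {s : α} {σ : List (WEdge α) → WEdge α}

lemma isOutcome_iff {π : ℕ → WEdge α} :
    IsOutcome E S0 s σ π ↔ ∀ k, IsConsistentAt E S0 s σ π k := by
  simp only [IsOutcome, IsConsistentAt, EndSt_Pref]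
  constructor
  · rintro ⟨hplay, hσ⟩ k
    exact ⟨hplay.1 k, hplay.fst_eq_StAt k, hσ k⟩
  · intro h
    exact ⟨⟨fun k => (h k).1, (h 0).2.1, fun k => ((h (k + 1)).2.1).symm⟩, fun k => (h k).2.2⟩

lemma IsConsistentAt.congr {π π' : ℕ → WEdge α} {k : ℕ} (hc : IsConsistentAt E S0 s σ π k)
    (h : ∀ i ≤ k, π i = π' i) : IsConsistentAt E S0 s σ π' k := by
  have hlt : ∀ i < k, π i = π' i := fun i hi => h i hi.le
  simp only [IsConsistentAt, ← h k le_rfl, ← StAt_congr hlt, ← Pref_congr hlt]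
  exact hc

lemma exists_isOutcome_extending (hσ : IsStrategy E S0 s σ)
    (htot : ∀ x : α, ∃ w x', (x, w, x') ∈ E) {π : ℕ → WEdge α} {n : ℕ}
    (h : ∀ k < n, IsConsistentAt E S0 s σ π k) :
    ∃ π₀, IsOutcome E S0 s σ π₀ ∧ ∀ k < n, π₀ k = π k := by
  classical
  choose w x' hw using htot
  let next : List (WEdge α) → WEdge α := fun l =>
    if EndSt s l ∈ S0 then σ l else (EndSt s l, w (EndSt s l), x' (EndSt s l))
  obtain ⟨π₀, hπ₀⟩ := exists_eq_of_Pref fun k l => if k < n then π k else next l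
  have agree : ∀ k < n, π₀ k = π k := fun k hk => by rw [hπ₀, if_pos hk]
  refine ⟨π₀, isOutcome_iff.2 fun k => ?_, agree⟩
  induction k using Nat.strong_induction_on with
  | _ k ih =>
    by_cases hk : k < n
    · exact (h k hk).congr fun i hi => (agree i (by omega)).symm
    have hnext : π₀ k = next (Pref π₀ k) := by rw [hπ₀, if_neg hk]
    simp only [next, EndSt_Pref] at hnext
    by_cases hS : StAt s π₀ k ∈ S0
    · rw [if_pos hS] at hnext
      have hpref := isPrefixFrom_Pref fun i hi => ⟨(ih i hi).1, (ih i hi).2.1⟩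
      obtain ⟨hE, hsrc⟩ := hσ _ hpref (by rwa [EndSt_Pref])
      rw [EndSt_Pref] at hsrc
      exact ⟨hnext ▸ hE, hnext ▸ hsrc, fun _ => hnext⟩
    · rw [if_neg hS] at hnext
      exact ⟨hnext ▸ hw _, by rw [hnext], fun h => absurd h hS⟩

lemma exists_isOutcome_extending_snoc (hσ : IsStrategy E S0 s σ)
    (htot : ∀ x : α, ∃ w x', (x, w, x') ∈ E) {π : ℕ → WEdge α} {n : ℕ}
    (h : ∀ k < n, IsConsistentAt E S0 s σ π k) {e : WEdge α} (he : e ∈ E)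
    (hsrc : e.1 = StAt s π n) (hσe : StAt s π n ∈ S0 → e = σ (Pref π n)) :
    ∃ π₀, IsOutcome E S0 s σ π₀ ∧ (∀ k < n, π₀ k = π k) ∧ π₀ n = e := by
  classical
  have agree : ∀ i < n, Function.update π n e i = π i := fun i hi =>
    Function.update_of_ne hi.ne _ _
  have hcons : ∀ k < n + 1, IsConsistentAt E S0 s σ (Function.update π n e) k := by
    intro k hk
    rcases Nat.lt_succ_iff_lt_or_eq.1 hk with hk | rfl
    · exact (h k hk).congr fun i hi => (agree i (by omega)).symm
    · simp only [IsConsistentAt, Function.update_self, StAt_congr agree, Pref_congr agree]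
      exact ⟨he, hsrc, hσe⟩
  obtain ⟨π₀, hout, hπ₀⟩ := exists_isOutcome_extending hσ htot hcons
  refine ⟨π₀, hout, fun k hk => ?_, ?_⟩
  · rw [hπ₀ k (by omega), agree k hk]
  · rw [hπ₀ n n.lt_succ_self, Function.update_self]

end Outcomes

open Filter Topology

lemma MP_eq_AE {α β : Type*} {π' : ℕ → WEdge β} {π : ℕ → WEdge α}
    (h : ∀ k, (π' k).2.1 = EL π (k + 1)) : MP π' = AE π := by
  ext n
  rw [MP, AE, EL]
  simp only [h]
  push_cast
  rfl

lemma not_limsupLE_of_eventually_add_const {f : ℕ → ℤ} {B : ℤ} {t : ℚ} (hB : t < B) {m : ℕ}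
    (hf : ∀ n ≥ m, f (n + 1) = f n + B) : ¬ LimsupLE (fun n => (f n : ℚ) / n) t := by
  have hlin : ∀ n ≥ m, (f n : ℚ) = f m + (n - m) * B := by
    refine Nat.le_induction (by simp) fun n hn ih => ?_
    rw [hf n hn]
    push_cast
    rw [ih]
    ring
  have hlim : Tendsto (fun n : ℕ => (f n : ℚ) / n) atTop (𝓝 B) := by
    have h := (tendsto_const_div_atTop_nhds_zero_nat ((f m : ℚ) - m * B)).const_add (B : ℚ)
    rw [add_zero] at h
    refine h.congr' ((eventually_ge_atTop (max m 1)).mono fun n hn => ?_)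
    have hn0 : (n : ℚ) ≠ 0 := by have : 1 ≤ n := le_of_max_le_right hn; positivity
    simp only
    rw [hlin n (le_of_max_le_left hn)]
    field_simp
    ring
  intro hle
  obtain ⟨N, hN⟩ := hle ((B - t) / 2) (by linarith)
  obtain ⟨n, hgt, hn⟩ :=
    ((hlim.eventually (lt_mem_nhds (by linarith : t + (B - t) / 2 < B))).and
      (eventually_ge_atTop N)).exists
  linarith [hN n hn]

section Expanded

variable {S : Type} {G : Game S} {t : ℚ}

/-- The move `e` of `G`, played in `G'` from energy level `c`. -/
def expStep (t : ℚ) (c : ℕ) (e : WEdge S) : WEdge (Conf S) :=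
  if 0 ≤ (c : ℤ) + e.2.1 then
    (some (e.1, c), (c : ℤ) + e.2.1, some (e.2.2, ((c : ℤ) + e.2.1).toNat))
  else (some (e.1, c), ⌈t⌉ + 1, none)

@[simp]
lemma expStep_fst (t : ℚ) (c : ℕ) (e : WEdge S) : (expStep t c e).1 = some (e.1, c) := by
  unfold expStep
  split_ifs <;> rfl

lemma expStep_of_nonneg {c : ℕ} {e : WEdge S} (h : 0 ≤ (c : ℤ) + e.2.1) :
    expStep t c e = (some (e.1, c), (c : ℤ) + e.2.1, some (e.2.2, ((c : ℤ) + e.2.1).toNat)) :=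
  if_pos h

lemma expStep_snd_snd_eq_none_iff {c : ℕ} {e : WEdge S} :
    (expStep t c e).2.2 = none ↔ (c : ℤ) + e.2.1 < 0 := by
  unfold expStep
  split_ifs with h
  · simp [h]
  · simpa using h

lemma expStep_mem {c : ℕ} {e : WEdge S} (he : e ∈ G.E) : expStep t c e ∈ ExpE G t := by
  unfold expStep
  split_ifs with h
  · exact Or.inl ⟨e.1, c, e.2.1, e.2.2, _, he, (Int.toNat_of_nonneg h).symm,
      by rw [Int.toNat_of_nonneg h]⟩
  · exact Or.inr (Or.inl ⟨e.1, c, e.2.1, e.2.2, he, not_le.1 h, rfl⟩)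

lemma exists_expStep_eq {e' : WEdge (Conf S)} (he' : e' ∈ ExpE G t) {s : S} {c : ℕ}
    (hsrc : e'.1 = some (s, c)) : ∃ e ∈ G.E, e.1 = s ∧ e' = expStep t c e := by
  rcases he' with ⟨s₁, c₁, w, s', c', he, hsum, rfl⟩ | ⟨s₁, c₁, w, s', he, hneg, rfl⟩ | rfl
  · obtain ⟨rfl, rfl⟩ := Prod.mk.inj (Option.some_inj.1 hsrc)
    refine ⟨(s₁, w, s'), he, rfl, ?_⟩
    rw [expStep_of_nonneg (show 0 ≤ (c₁ : ℤ) + w by omega), hsum]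
    simp
  · obtain ⟨rfl, rfl⟩ := Prod.mk.inj (Option.some_inj.1 hsrc)
    exact ⟨(s₁, w, s'), he, rfl, (if_neg (not_le.2 hneg)).symm⟩
  · cases hsrc

lemma eq_of_mem_expE_of_fst_eq_none {e' : WEdge (Conf S)} (he' : e' ∈ ExpE G t)
    (hsrc : e'.1 = none) : e' = (none, ⌈t⌉ + 1, none) := by
  rcases he' with ⟨_, _, _, _, _, _, _, rfl⟩ | ⟨_, _, _, _, _, _, rfl⟩ | rfl
  · cases hsrc
  · cases hsrc
  · rfl

lemma some_mem_ExpS0 {s : S} {c : ℕ} : some (s, c) ∈ ExpS0 G ↔ s ∈ G.S0 := by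
  simp [ExpS0]

noncomputable def Game.someEdge (G : Game S) (s : S) : WEdge S :=
  (s, (G.total s).choose, (G.total s).choose_spec.choose)

lemma Game.someEdge_mem (G : Game S) (s : S) : G.someEdge s ∈ G.E :=
  (G.total s).choose_spec.choose_spec

lemma expE_total (G : Game S) (t : ℚ) (γ : Conf S) : ∃ w γ', (γ, w, γ') ∈ ExpE G t := by
  rcases γ with _ | ⟨s, c⟩
  · exact ⟨_, _, Or.inr (Or.inr rfl)⟩
  · have h := expStep_mem (t := t) (c := c) (G.someEdge_mem s)
    have hfst : expStep t c (G.someEdge s) =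
        (some (s, c), (expStep t c (G.someEdge s)).2.1, (expStep t c (G.someEdge s)).2.2) :=
      Prod.ext (expStep_fst t c _) rfl
    exact ⟨_, _, hfst ▸ h⟩

lemma not_limsupLE_MP_of_StAt_eq_none {γ : Conf S} {π' : ℕ → WEdge (Conf S)}
    (hplay : IsPlay (ExpE G t) γ π') {m : ℕ} (hm : StAt γ π' m = none) :
    ¬ LimsupLE (MP π') t := by
  have hloop : ∀ n, StAt γ π' n = none → π' n = (none, ⌈t⌉ + 1, none) := fun n hn =>
    eq_of_mem_expE_of_fst_eq_none (hplay.1 n) (by rw [hplay.fst_eq_StAt, hn])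
  have hbot : ∀ n ≥ m, StAt γ π' n = none :=
    Nat.le_induction hm fun n _ ih => by rw [StAt, hloop n ih]
  refine not_limsupLE_of_eventually_add_const (f := EL π') (B := ⌈t⌉ + 1) (m := m) ?_
    fun n hn => ?_
  · push_cast
    linarith [Int.le_ceil t]
  · rw [EL_succ, hloop n (hbot n hn)]

end Expanded

section Strategies

variable {S : Type} {G : Game S} {t : ℚ} {sinit : S}

/-- The play of `G'` that follows `π` while tracking its energy level in the counter. -/
def liftPlay (t : ℚ) (π : ℕ → WEdge S) (k : ℕ) : WEdge (Conf S) :=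
  expStep t (EL π k).toNat (π k)

lemma liftPlay_of_nonneg {π : ℕ → WEdge S} {k : ℕ} (h₀ : 0 ≤ EL π k) (h₁ : 0 ≤ EL π (k + 1)) :
    liftPlay t π k =
      (some ((π k).1, (EL π k).toNat), EL π (k + 1), some ((π k).2.2, (EL π (k + 1)).toNat)) := by
  rw [liftPlay, expStep_of_nonneg (by rwa [Int.toNat_of_nonneg h₀, ← EL_succ]),
    Int.toNat_of_nonneg h₀, ← EL_succ]

lemma StAt_liftPlay {π : ℕ → WEdge S} {n : ℕ} (h : ∀ k ≤ n, 0 ≤ EL π k) :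
    StAt (some (sinit, 0)) (liftPlay t π) n = some (StAt sinit π n, (EL π n).toNat) := by
  cases n with
  | zero => simp [StAt, EL]
  | succ n => rw [StAt, liftPlay_of_nonneg (h n n.le_succ) (h _ le_rfl)]; rfl

lemma MP_liftPlay {π : ℕ → WEdge S} (h : ∀ k, 0 ≤ EL π k) : MP (liftPlay t π) = AE π :=
  MP_eq_AE fun k => by rw [liftPlay_of_nonneg (h k) (h (k + 1))]

/-- Inverse of `expStep` on edges between configurations (`d` is a junk value for the others). -/
def lowerEdge (d : WEdge S) : WEdge (Conf S) → WEdge S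
  | (some (s, c), _, some (s', c')) => (s, (c' : ℤ) - c, s')
  | _ => d

lemma lowerEdge_expStep (d : WEdge S) {c : ℕ} {e : WEdge S} (h : 0 ≤ (c : ℤ) + e.2.1) :
    lowerEdge d (expStep t c e) = e := by
  rw [expStep_of_nonneg h]
  simp [lowerEdge, Int.toNat_of_nonneg h]

open Classical in
/-- Replaces an illegal move at `s` by a legal one, so that translated strategies are legal on
every history, including those where the translation is meaningless. -/
noncomputable def Game.legalize (G : Game S) (s : S) (e : WEdge S) : WEdge S :=
  if e ∈ G.E ∧ e.1 = s then e else G.someEdge s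

lemma Game.legalize_spec (G : Game S) (s : S) (e : WEdge S) :
    G.legalize s e ∈ G.E ∧ (G.legalize s e).1 = s := by
  unfold Game.legalize
  split_ifs with h
  · exact h
  · exact ⟨G.someEdge_mem s, rfl⟩

lemma Game.legalize_of_mem {s : S} {e : WEdge S} (he : e ∈ G.E) (hs : e.1 = s) :
    G.legalize s e = e :=
  if_pos ⟨he, hs⟩

noncomputable def expStrategy (G : Game S) (t : ℚ) (sinit : S) (σ : List (WEdge S) → WEdge S)
    (ρ' : List (WEdge (Conf S))) : WEdge (Conf S) :=
  match EndSt (some (sinit, 0)) ρ' with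
  | some (s, c) => expStep t c (G.legalize s (σ (ρ'.map (lowerEdge (G.someEdge sinit)))))
  | none => (none, ⌈t⌉ + 1, none)

lemma expStrategy_of_EndSt_eq {σ : List (WEdge S) → WEdge S} {ρ' : List (WEdge (Conf S))}
    {s : S} {c : ℕ} (h : EndSt (some (sinit, 0)) ρ' = some (s, c)) :
    expStrategy G t sinit σ ρ' =
      expStep t c (G.legalize s (σ (ρ'.map (lowerEdge (G.someEdge sinit))))) := by
  simp only [expStrategy, h]

lemma expStrategy_isStrategy (σ : List (WEdge S) → WEdge S) :
    IsStrategy (ExpE G t) (ExpS0 G) (some (sinit, 0)) (expStrategy G t sinit σ) := by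
  rintro ρ' - ⟨s, c, -, hend⟩
  rw [expStrategy_of_EndSt_eq hend, hend, expStep_fst, (G.legalize_spec _ _).2]
  exact ⟨expStep_mem (G.legalize_spec _ _).1, rfl⟩

/-- The history `ρ` is read as a play prefix, padded with junk, so that it can be lifted. -/
noncomputable def lowerStrategy (G : Game S) (t : ℚ) (sinit : S)
    (σ' : List (WEdge (Conf S)) → WEdge (Conf S)) (ρ : List (WEdge S)) : WEdge S :=
  G.legalize (EndSt sinit ρ) (lowerEdge (G.someEdge sinit)
    (σ' (Pref (liftPlay t fun i => ρ.getD i (G.someEdge sinit)) ρ.length)))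

lemma lowerStrategy_Pref (σ' : List (WEdge (Conf S)) → WEdge (Conf S)) (π : ℕ → WEdge S)
    (n : ℕ) : lowerStrategy G t sinit σ' (Pref π n) =
      G.legalize (StAt sinit π n)
        (lowerEdge (G.someEdge sinit) (σ' (Pref (liftPlay t π) n))) := by
  have hget : ∀ i < n, (Pref π n).getD i (G.someEdge sinit) = π i := fun i hi => by
    simp [Pref, hi]
  rw [lowerStrategy, EndSt_Pref, Pref_length,
    Pref_congr (π' := liftPlay t π) fun k hk => by
      simp only [liftPlay, hget k hk, EL_congr fun i hi => hget i (hi.trans hk)]]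

lemma lowerStrategy_isStrategy (σ' : List (WEdge (Conf S)) → WEdge (Conf S)) :
    IsStrategy G.E G.S0 sinit (lowerStrategy G t sinit σ') :=
  fun _ _ _ => G.legalize_spec _ _

end Strategies

section Forward

variable {S : Type} {G : Game S} {t : ℚ} {sinit : S} {σ : List (WEdge S) → WEdge S}

lemma expStrategy_move (hσ : IsStrategy G.E G.S0 sinit σ) {π' : ℕ → WEdge (Conf S)}
    (hout : IsOutcome (ExpE G t) (ExpS0 G) (some (sinit, 0)) (expStrategy G t sinit σ) π')
    {n c : ℕ}
    (hcons : ∀ k < n, IsConsistentAt G.E G.S0 sinit σ (lowerEdge (G.someEdge sinit) ∘ π') k)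
    (hconf : StAt (some (sinit, 0)) π' n =
      some (StAt sinit (lowerEdge (G.someEdge sinit) ∘ π') n, c)) :
    ∃ e ∈ G.E, e.1 = StAt sinit (lowerEdge (G.someEdge sinit) ∘ π') n ∧
      (StAt sinit (lowerEdge (G.someEdge sinit) ∘ π') n ∈ G.S0 →
        e = σ (Pref (lowerEdge (G.someEdge sinit) ∘ π') n)) ∧ π' n = expStep t c e := by
  set π := lowerEdge (G.someEdge sinit) ∘ π'
  obtain ⟨hmem, hsrc, hmove⟩ := isOutcome_iff.1 hout n
  rw [hconf] at hsrc hmove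
  by_cases hS : StAt sinit π n ∈ G.S0
  · have hpref : Pref π n = (Pref π' n).map (lowerEdge (G.someEdge sinit)) := by
      simp only [π, Pref, List.map_ofFn]
      rfl
    obtain ⟨hE, hσsrc⟩ := hσ (Pref π n)
      (isPrefixFrom_Pref fun k hk => ⟨(hcons k hk).1, (hcons k hk).2.1⟩) (by rwa [EndSt_Pref])
    rw [EndSt_Pref] at hσsrc
    refine ⟨_, hE, hσsrc, fun _ => rfl, ?_⟩
    rw [hmove (some_mem_ExpS0.2 hS), expStrategy_of_EndSt_eq (by rw [EndSt_Pref, hconf]),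
      ← hpref, G.legalize_of_mem hE hσsrc]
  · obtain ⟨e, he, hes, hstep⟩ := exists_expStep_eq hmem hsrc
    exact ⟨e, he, hes, fun h => absurd h hS, hstep⟩

lemma expStrategy_invariant (hσ : IsStrategy G.E G.S0 sinit σ)
    (hnonneg : ∀ π, IsOutcome G.E G.S0 sinit σ π → ∀ n, 0 ≤ EL π n) {π' : ℕ → WEdge (Conf S)}
    (hout : IsOutcome (ExpE G t) (ExpS0 G) (some (sinit, 0)) (expStrategy G t sinit σ) π')
    (n : ℕ) :
    (∀ k ≤ n, 0 ≤ EL (lowerEdge (G.someEdge sinit) ∘ π') k) ∧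
      ∀ k < n, IsConsistentAt G.E G.S0 sinit σ (lowerEdge (G.someEdge sinit) ∘ π') k ∧
        π' k = liftPlay t (lowerEdge (G.someEdge sinit) ∘ π') k := by
  set π := lowerEdge (G.someEdge sinit) ∘ π'
  induction n with
  | zero => exact ⟨fun k hk => by simp [Nat.le_zero.1 hk, EL], fun k hk => absurd hk k.not_lt_zero⟩
  | succ n ih =>
    obtain ⟨hnn, hcons⟩ := ih
    have hconf : StAt (some (sinit, 0)) π' n = some (StAt sinit π n, (EL π n).toNat) := by
      rw [StAt_congr fun k hk => (hcons k hk).2, StAt_liftPlay hnn]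
    obtain ⟨e, he, hes, hσe, hstep⟩ :=
      expStrategy_move hσ hout (fun k hk => (hcons k hk).1) hconf
    obtain ⟨π₀, hout₀, hagree, hπ₀n⟩ :=
      exists_isOutcome_extending_snoc hσ G.total (fun k hk => (hcons k hk).1) he hes hσe
    have hw : 0 ≤ EL π n + e.2.1 := by
      simpa only [EL_succ, EL_congr hagree, hπ₀n] using hnonneg π₀ hout₀ (n + 1)
    have hπn : π n = e := by
      simp only [π, Function.comp, hstep]
      exact lowerEdge_expStep _ (by rwa [Int.toNat_of_nonneg (hnn n le_rfl)])
    refine ⟨fun k hk => ?_, fun k hk => ?_⟩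
    · rcases Nat.le_succ_iff.1 hk with hk | rfl
      · exact hnn k hk
      · rwa [EL_succ, hπn]
    · rcases Nat.lt_succ_iff_lt_or_eq.1 hk with hk | rfl
      · exact hcons k hk
      · exact ⟨⟨hπn ▸ he, hπn ▸ hes, fun h => hπn ▸ hσe h⟩, by rw [liftPlay, hstep, hπn]⟩

lemma expStrategy_winning (hσ : IsStrategy G.E G.S0 sinit σ)
    (hwin : ∀ π, IsOutcome G.E G.S0 sinit σ π →
      (∀ n, 1 ≤ n → 0 ≤ EL π n) ∧ LimsupLE (AE π) t)
    (π' : ℕ → WEdge (Conf S))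
    (hout : IsOutcome (ExpE G t) (ExpS0 G) (some (sinit, 0)) (expStrategy G t sinit σ) π') :
    LimsupLE (MP π') t := by
  have hnonneg : ∀ π, IsOutcome G.E G.S0 sinit σ π → ∀ n, 0 ≤ EL π n := by
    rintro π hπ (_ | n)
    · simp [EL]
    · exact (hwin π hπ).1 _ n.succ_pos
  have hinv := expStrategy_invariant hσ hnonneg hout
  have hπ : IsOutcome G.E G.S0 sinit σ (lowerEdge (G.someEdge sinit) ∘ π') :=
    isOutcome_iff.2 fun k => ((hinv (k + 1)).2 k k.lt_succ_self).1
  have hlift : π' = liftPlay t (lowerEdge (G.someEdge sinit) ∘ π') :=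
    funext fun k => ((hinv (k + 1)).2 k k.lt_succ_self).2
  rw [hlift, MP_liftPlay fun k => (hinv k).1 k le_rfl]
  exact (hwin _ hπ).2

end Forward

section Backward

variable {S : Type} {G : Game S} {t : ℚ} {sinit : S}
  {σ' : List (WEdge (Conf S)) → WEdge (Conf S)}

lemma snd_snd_ne_none_of_winning (hσ' : IsStrategy (ExpE G t) (ExpS0 G) (some (sinit, 0)) σ')
    (hwin' : ∀ π', IsOutcome (ExpE G t) (ExpS0 G) (some (sinit, 0)) σ' π' → LimsupLE (MP π') t)
    {π' : ℕ → WEdge (Conf S)} {n : ℕ}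
    (hcons : ∀ k < n, IsConsistentAt (ExpE G t) (ExpS0 G) (some (sinit, 0)) σ' π' k)
    {e : WEdge (Conf S)} (he : e ∈ ExpE G t) (hsrc : e.1 = StAt (some (sinit, 0)) π' n)
    (hσe : StAt (some (sinit, 0)) π' n ∈ ExpS0 G → e = σ' (Pref π' n)) : e.2.2 ≠ none := by
  obtain ⟨π₀, hout, -, hπ₀n⟩ :=
    exists_isOutcome_extending_snoc hσ' (expE_total G t) hcons he hsrc hσe
  intro hnone
  exact not_limsupLE_MP_of_StAt_eq_none hout.1 (m := n + 1) (by rw [StAt, hπ₀n, hnone])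
    (hwin' π₀ hout)

lemma isConsistentAt_liftPlay (hσ' : IsStrategy (ExpE G t) (ExpS0 G) (some (sinit, 0)) σ')
    (hwin' : ∀ π', IsOutcome (ExpE G t) (ExpS0 G) (some (sinit, 0)) σ' π' → LimsupLE (MP π') t)
    {π : ℕ → WEdge S} (hout : IsOutcome G.E G.S0 sinit (lowerStrategy G t sinit σ') π) {n : ℕ}
    (hnn : ∀ k ≤ n, 0 ≤ EL π k)
    (hcons : ∀ k < n, IsConsistentAt (ExpE G t) (ExpS0 G) (some (sinit, 0)) σ' (liftPlay t π) k) :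
    IsConsistentAt (ExpE G t) (ExpS0 G) (some (sinit, 0)) σ' (liftPlay t π) n := by
  obtain ⟨hE, hsrc, hmove⟩ := isOutcome_iff.1 hout n
  have hconf := StAt_liftPlay (t := t) (sinit := sinit) hnn
  refine ⟨expStep_mem hE, by rw [hconf, liftPlay, expStep_fst, hsrc], fun hS => ?_⟩
  rw [hconf, some_mem_ExpS0] at hS
  obtain ⟨hmE, hmsrc⟩ := hσ' _ (isPrefixFrom_Pref fun k hk => ⟨(hcons k hk).1, (hcons k hk).2.1⟩)
    (by rw [EndSt_Pref, hconf, some_mem_ExpS0]; exact hS)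
  rw [EndSt_Pref] at hmsrc
  have hsafe := snd_snd_ne_none_of_winning hσ' hwin' hcons hmE hmsrc fun _ => rfl
  rw [hconf] at hmsrc
  obtain ⟨e, he, hes, hm⟩ := exists_expStep_eq hmE hmsrc
  rw [hm, Ne, expStep_snd_snd_eq_none_iff, not_lt] at hsafe
  have hπn : π n = e := by
    rw [hmove hS, lowerStrategy_Pref, hm, lowerEdge_expStep _ hsafe, G.legalize_of_mem he hes]
  rw [liftPlay, hπn, hm]

lemma lowerStrategy_invariant (hσ' : IsStrategy (ExpE G t) (ExpS0 G) (some (sinit, 0)) σ')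
    (hwin' : ∀ π', IsOutcome (ExpE G t) (ExpS0 G) (some (sinit, 0)) σ' π' → LimsupLE (MP π') t)
    {π : ℕ → WEdge S} (hout : IsOutcome G.E G.S0 sinit (lowerStrategy G t sinit σ') π) (n : ℕ) :
    (∀ k ≤ n, 0 ≤ EL π k) ∧
      ∀ k < n, IsConsistentAt (ExpE G t) (ExpS0 G) (some (sinit, 0)) σ' (liftPlay t π) k := by
  induction n with
  | zero => exact ⟨fun k hk => by simp [Nat.le_zero.1 hk, EL], fun k hk => absurd hk k.not_lt_zero⟩
  | succ n ih =>
    obtain ⟨hnn, hcons⟩ := ih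
    have hn := isConsistentAt_liftPlay hσ' hwin' hout hnn hcons
    have hw := snd_snd_ne_none_of_winning hσ' hwin' hcons hn.1 hn.2.1 hn.2.2
    rw [liftPlay, Ne, expStep_snd_snd_eq_none_iff, not_lt, Int.toNat_of_nonneg (hnn n le_rfl),
      ← EL_succ] at hw
    refine ⟨fun k hk => ?_, fun k hk => ?_⟩
    · rcases Nat.le_succ_iff.1 hk with hk | rfl
      · exact hnn k hk
      · exact hw
    · rcases Nat.lt_succ_iff_lt_or_eq.1 hk with hk | rfl
      · exact hcons k hk
      · exact hn

lemma lowerStrategy_winning (hσ' : IsStrategy (ExpE G t) (ExpS0 G) (some (sinit, 0)) σ')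
    (hwin' : ∀ π', IsOutcome (ExpE G t) (ExpS0 G) (some (sinit, 0)) σ' π' → LimsupLE (MP π') t)
    (π : ℕ → WEdge S) (hout : IsOutcome G.E G.S0 sinit (lowerStrategy G t sinit σ') π) :
    (∀ n, 1 ≤ n → 0 ≤ EL π n) ∧ LimsupLE (AE π) t := by
  have hinv := lowerStrategy_invariant hσ' hwin' hout
  have hπ' : IsOutcome (ExpE G t) (ExpS0 G) (some (sinit, 0)) σ' (liftPlay t π) :=
    isOutcome_iff.2 fun k => (hinv (k + 1)).2 k k.lt_succ_self
  refine ⟨fun n _ => (hinv n).1 n le_rfl, ?_⟩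
  rw [← MP_liftPlay fun k => (hinv k).1 k le_rfl]
  exact hwin' _ hπ'

end Backward

theorem statement0_general {S : Type} (G : Game S) (sinit : S) (t : ℚ) :
    (∃ σ, IsStrategy G.E G.S0 sinit σ ∧
        ∀ π, IsOutcome G.E G.S0 sinit σ π →
          (∀ n, 1 ≤ n → 0 ≤ EL π n) ∧ LimsupLE (AE π) t) ↔
    (∃ σ', IsStrategy (ExpE G t) (ExpS0 G) (some (sinit, 0)) σ' ∧
        ∀ π', IsOutcome (ExpE G t) (ExpS0 G) (some (sinit, 0)) σ' π' →
          LimsupLE (MP π') t) := by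
  constructor
  · rintro ⟨σ, hσ, hwin⟩
    exact ⟨_, expStrategy_isStrategy σ, expStrategy_winning hσ hwin⟩
  · rintro ⟨σ', hσ', hwin'⟩
    exact ⟨_, lowerStrategy_isStrategy σ', lowerStrategy_winning hσ' hwin'⟩

/-- Player `P₀` has a winning strategy in the finite weighted game `G`
from `s_init` for the objective `AEL(t) = EGL ∩ AE(t)` (energy always nonnegative and
average-energy at most `t`) if, and only if, `P₀` has a winning strategy in the expanded
infinite-state game `G'` from the configuration `(s_init, 0)` for the mean-payoff
objective `MP(t)`. -/
theorem statement0 {S : Type} [Fintype S] (G : Game S) (sinit : S) (t : ℚ) (ht : 0 ≤ t) :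
    (∃ σ, IsStrategy G.E G.S0 sinit σ ∧
        ∀ π, IsOutcome G.E G.S0 sinit σ π →
          (∀ n, 1 ≤ n → 0 ≤ EL π n) ∧ LimsupLE (AE π) t) ↔
    (∃ σ', IsStrategy (ExpE G t) (ExpS0 G) (some (sinit, 0)) σ' ∧
        ∀ π', IsOutcome (ExpE G t) (ExpS0 G) (some (sinit, 0)) σ' π' →
          LimsupLE (MP π') t) :=
  statement0_general G sinit t

end AvgEnergy
end

section
/- Let π be a play in the expanded game G' from (s_init, 0) with MPsup(π) ≤ t. Then there exists n ∈ ℕ such that for every n' ≥ n, density(Γ^{≤t}, π_{≤n'}) ≥ t̃ / (2(t + 1)). -/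
namespace AvgEnergy

/-- The set `Γ^{≤t}` of configurations whose counter value is at most `t`. -/
def ConfLE {S : Type*} (t : ℚ) : Set (Conf S) :=
  {γ | ∃ (s : S) (c : ℕ), γ = some (s, c) ∧ (c : ℚ) ≤ t}

/-- `density(Γ̃, π_{≤n})`: the proportion of positions `1 ≤ i ≤ n` whose configuration
belongs to `Γ̃` (the initial configuration is not counted). -/
noncomputable def density {S : Type*} (Γt : Set (Conf S)) (s0 : Conf S)
    (π : ℕ → WEdge (Conf S)) (n : ℕ) : ℚ :=
  ({i | 1 ≤ i ∧ i ≤ n ∧ StAt s0 π i ∈ Γt}.ncard : ℚ) / n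

/-- For every play `π` of the expanded game `G'` from `(s_init, 0)` with
`MPsup(π) ≤ t`, there is `n` such that for all `n' ≥ n`,
`density(Γ^{≤t}, π_{≤n'}) ≥ t̃ / (2(t+1))` where `t̃ = ⌊t⌋ + 1 − t`. -/
theorem statement2 {S : Type} [Fintype S] (G : Game S) (sinit : S) (t : ℚ) (ht : 0 ≤ t)
    (π : ℕ → WEdge (Conf S))
    (hplay : IsPlay (ExpE G t) (some (sinit, 0)) π)
    (hmp : LimsupLE (MP π) t) :
    ∃ n, ∀ n' ≥ n,
      ((⌊t⌋ : ℚ) + 1 - t) / (2 * (t + 1)) ≤ density (ConfLE t) (some (sinit, 0)) π n' := by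
  classical
  obtain ⟨hE, h0, hchain⟩ := hplay
  set s0 : Conf S := some (sinit, 0) with hs0
  -- structure of edge weights
  have hw : ∀ i, (∃ (s' : S) (c' : ℕ), (π i).2.2 = some (s', c') ∧ (π i).2.1 = (c' : ℤ)) ∨
      ((π i).2.2 = none ∧ (π i).2.1 = ⌈t⌉ + 1) := by
    intro i
    rcases hE i with ⟨s, c, w, s', c', _, _, heq⟩ | ⟨s, c, w, s', _, _, heq⟩ | heq
    · exact Or.inl ⟨s', c', by rw [heq], by rw [heq]⟩
    · exact Or.inr ⟨by rw [heq], by rw [heq]⟩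
    · exact Or.inr ⟨by rw [heq], by rw [heq]⟩
  have hceil : (0 : ℤ) ≤ ⌈t⌉ + 1 := by
    have := Int.ceil_nonneg ht; omega
  have hwnn : ∀ i, (0 : ℤ) ≤ (π i).2.1 := by
    intro i
    rcases hw i with ⟨s', c', _, hv⟩ | ⟨_, hv⟩
    · rw [hv]; exact Int.ofNat_nonneg c'
    · rw [hv]; exact hceil
  set Q : ℕ → Prop := fun i => StAt s0 π (i + 1) ∈ ConfLE t with hQ
  have hwbig : ∀ i, ¬ Q i → (⌊t⌋ + 1 : ℤ) ≤ (π i).2.1 := by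
    intro i hni
    have hst : StAt s0 π (i + 1) = (π i).2.2 := rfl
    rcases hw i with ⟨s', c', he2, hv⟩ | ⟨_, hv⟩
    · rw [hv]
      by_contra hlt
      push_neg at hlt
      refine hni ⟨s', c', by rw [hst, he2], ?_⟩
      have hle : ((c' : ℤ)) ≤ ⌊t⌋ := by omega
      have := Int.le_floor.mp hle
      push_cast at this
      exact this
    · rw [hv]
      have := Int.floor_le_ceil t; omega
  -- lower bound on energy levels
  have hEL : ∀ n, ((⌊t⌋ + 1 : ℤ)) *
      (((Finset.range n).filter (fun i => ¬ Q i)).card : ℤ) ≤ EL π n := by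
    intro n
    have h1 : ((Finset.range n).filter (fun i => ¬ Q i)).card • ((⌊t⌋ + 1 : ℤ)) ≤
        ∑ i ∈ (Finset.range n).filter (fun i => ¬ Q i), (π i).2.1 :=
      Finset.card_nsmul_le_sum _ _ _ (fun i hi => hwbig i (Finset.mem_filter.mp hi).2)
    have h2 : ∑ i ∈ (Finset.range n).filter (fun i => ¬ Q i), (π i).2.1 ≤
        ∑ i ∈ Finset.range n, (π i).2.1 :=
      Finset.sum_le_sum_of_subset_of_nonneg (Finset.filter_subset _ _)
        (fun i _ _ => hwnn i)
    have := le_trans h1 h2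
    rw [nsmul_eq_mul] at this
    rw [EL]
    linarith
  -- density as a filter cardinality
  have hdens : ∀ n : ℕ, density (ConfLE t) s0 π n =
      (((Finset.range n).filter (fun i => Q i)).card : ℚ) / n := by
    intro n
    have hset : {i | 1 ≤ i ∧ i ≤ n ∧ StAt s0 π i ∈ ConfLE t} =
        ↑((((Finset.range n).filter (fun i => Q i)).image (· + 1))) := by
      ext i
      simp only [Set.mem_setOf_eq, Finset.coe_image, Set.mem_image, Finset.mem_coe,
        Finset.mem_filter, Finset.mem_range]
      constructor
      · rintro ⟨h1, h2, hP⟩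
        refine ⟨i - 1, ⟨by omega, ?_⟩, by omega⟩
        show StAt s0 π (i - 1 + 1) ∈ ConfLE t
        rw [Nat.sub_add_cancel h1]
        exact hP
      · rintro ⟨a, ⟨ha, hPa⟩, rfl⟩
        exact ⟨by omega, by omega, hPa⟩
    rw [density, hset, Set.ncard_coe_finset,
      Finset.card_image_of_injective _ (add_left_injective 1)]
  -- choose ε = τ/2
  set τ : ℚ := (⌊t⌋ : ℚ) + 1 - t with hτdef
  have hτ : 0 < τ := by
    have := Int.lt_floor_add_one t
    rw [hτdef]; push_cast; linarith
  obtain ⟨N, hN⟩ := hmp (τ / 2) (by positivity)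
  refine ⟨max N 1, fun n' hn' => ?_⟩
  have hn1 : 1 ≤ n' := le_trans (le_max_right N 1) hn'
  have hnpos : (0 : ℚ) < (n' : ℚ) := by exact_mod_cast hn1
  have hmpn := hN n' (le_trans (le_max_left N 1) hn')
  rw [MP, div_le_iff₀ hnpos] at hmpn
  set k := ((Finset.range n').filter (fun i => Q i)).card with hk
  set m := ((Finset.range n').filter (fun i => ¬ Q i)).card with hm
  have hkm : k + m = n' := by
    simpa using Finset.card_filter_add_card_filter_not (s := Finset.range n') (fun i => Q i)
  have hELn := hEL n'
  have hkey : ((⌊t⌋ : ℚ) + 1) * (m : ℚ) ≤ (t + τ / 2) * (n' : ℚ) := by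
    have h1 : (((⌊t⌋ + 1 : ℤ) * (m : ℤ) : ℤ) : ℚ) ≤ ((EL π n' : ℤ) : ℚ) := by
      exact_mod_cast hELn
    push_cast at h1
    linarith
  rw [hdens n', div_le_div_iff₀ (by positivity) hnpos]
  have hfl : (⌊t⌋ : ℚ) ≤ t := Int.floor_le t
  have hflnn : (0 : ℚ) ≤ (⌊t⌋ : ℚ) := by exact_mod_cast Int.floor_nonneg.mpr ht
  have hkmq : (k : ℚ) + (m : ℚ) = (n' : ℚ) := by exact_mod_cast hkm
  have hknn : (0 : ℚ) ≤ (k : ℚ) := Nat.cast_nonneg k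
  nlinarith [mul_nonneg hknn (sub_nonneg.mpr hfl)]

end AvgEnergy
end

section
/- Let π be a play in the expanded game G' from (s_init, 0) with MPsup(π) ≤ t. Then there exists a configuration γ ∈ Γ^{≤t} such that for every n ∈ ℕ there exist infinitely many n' ≥ n with density({γ}, π_{[n,n']}) ≥ t̃ / (4(t + 1)² |S|), where π_{[n,n']} denotes the infix of π consisting of its edges at positions n+1 through n'. -/
namespace AvgEnergy

/-- `density(Γ̃, π_{[n,n']})`: the proportion of positions `n+1 ≤ i ≤ n'` whose
configuration belongs to `Γ̃`, among the `n' − n` positions of the infix `π_{[n,n']}`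
(the initial configuration of the infix is not counted). -/
noncomputable def densityIn {S : Type*} (Γt : Set (Conf S)) (s0 : Conf S)
    (π : ℕ → WEdge (Conf S)) (n n' : ℕ) : ℚ :=
  ({i | n + 1 ≤ i ∧ i ≤ n' ∧ StAt s0 π i ∈ Γt}.ncard : ℚ) / ((n' - n : ℕ) : ℚ)

open Finset Filter

section Pigeonhole

variable {β : Type*} [DecidableEq β] (f : ℕ → β)

lemma eventually_card_visits_le_of_finite_dense {γ : β} {D : ℚ} (hD : 0 ≤ D) {n : ℕ}
    (hfin : {n' | n ≤ n' ∧ D ≤ (#{j ∈ Ioc n n' | f j = γ} : ℚ) / (n' - n : ℕ)}.Finite) :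
    ∀ᶠ n' in atTop, (#{j ∈ Ioc 0 n' | f j = γ} : ℚ) ≤ D * n' + n := by
  obtain ⟨B, hB⟩ := hfin.bddAbove
  filter_upwards [eventually_gt_atTop (max n B)] with n' hn'
  have hnn' : n < n' := lt_of_le_of_lt (le_max_left _ _) hn'
  have hsparse : (#{j ∈ Ioc n n' | f j = γ} : ℚ) / (n' - n : ℕ) < D := by
    by_contra! hdense
    have : n' ≤ B := hB ⟨hnn'.le, hdense⟩
    omega
  have hlen : (0 : ℚ) < (n' - n : ℕ) := by exact_mod_cast Nat.sub_pos_of_lt hnn'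
  have hwindow : (#{j ∈ Ioc n n' | f j = γ} : ℚ) ≤ D * n' :=
    calc (#{j ∈ Ioc n n' | f j = γ} : ℚ) ≤ D * (n' - n : ℕ) := ((div_lt_iff₀ hlen).1 hsparse).le
      _ ≤ D * n' := mul_le_mul_of_nonneg_left (by exact_mod_cast Nat.sub_le n' n) hD
  have hsplit : #{j ∈ Ioc 0 n' | f j = γ} ≤ n + #{j ∈ Ioc n n' | f j = γ} :=
    calc #{j ∈ Ioc 0 n' | f j = γ}
        ≤ #{j ∈ Ioc 0 n | f j = γ} + #{j ∈ Ioc n n' | f j = γ} := by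
          rw [← Ioc_union_Ioc_eq_Ioc n.zero_le hnn'.le, filter_union]
          exact card_union_le _ _
      _ ≤ n + #{j ∈ Ioc n n' | f j = γ} := by
          gcongr
          exact (card_filter_le _ _).trans (Nat.card_Ioc 0 n).le
  have : (#{j ∈ Ioc 0 n' | f j = γ} : ℚ) ≤ n + #{j ∈ Ioc n n' | f j = γ} := by
    exact_mod_cast hsplit
  linarith

theorem exists_frequently_dense (L : Finset β) {ρ D : ℚ} (hD : 0 ≤ D) (hLD : #L * D < ρ)
    (hfreq : ∃ᶠ n in atTop, ρ * n ≤ #{j ∈ Ioc 0 n | f j ∈ L}) :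
    ∃ γ ∈ L, ∀ n,
      {n' | n ≤ n' ∧ D ≤ (#{j ∈ Ioc n n' | f j = γ} : ℚ) / (n' - n : ℕ)}.Infinite := by
  by_contra! hsparse
  choose! start hstart using hsparse
  set C : ℚ := ∑ γ ∈ L, (start γ : ℚ)
  have hvisits : ∀ᶠ n in atTop, ∀ γ ∈ L,
      (#{j ∈ Ioc 0 n | f j = γ} : ℚ) ≤ D * n + start γ :=
    (eventually_all_finset _).2 fun γ hγ =>
      eventually_card_visits_le_of_finite_dense f hD (hstart γ hγ)
  have hlarge : ∀ᶠ n : ℕ in atTop, C / (ρ - #L * D) < n :=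
    tendsto_natCast_atTop_atTop.eventually (eventually_gt_atTop _)
  obtain ⟨n, hn, hvisits, hlarge⟩ := (hfreq.and_eventually (hvisits.and hlarge)).exists
  have hcount : (#{j ∈ Ioc 0 n | f j ∈ L} : ℚ) ≤ #L * D * n + C :=
    calc (#{j ∈ Ioc 0 n | f j ∈ L} : ℚ)
        = ∑ γ ∈ L, (#{j ∈ Ioc 0 n | f j = γ} : ℚ) := by
          rw [← sum_card_fiberwise_eq_card_filter, Nat.cast_sum]
      _ ≤ ∑ γ ∈ L, (D * n + start γ) := sum_le_sum hvisits
      _ = #L * D * n + C := by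
          rw [sum_add_distrib, sum_const, nsmul_eq_mul]; ring
  rw [div_lt_iff₀ (sub_pos.2 hLD)] at hlarge
  linarith

end Pigeonhole

section MeanPayoff

variable {α : Type*}

lemma card_heavy_mul_le_EL (π : ℕ → WEdge α) (hw : ∀ i, 0 ≤ (π i).2.1) (t : ℚ) (n : ℕ) :
    (#{i ∈ range n | t < (π i).2.1} : ℤ) * (⌊t⌋ + 1) ≤ EL π n :=
  calc (#{i ∈ range n | t < (π i).2.1} : ℤ) * (⌊t⌋ + 1)
      = #{i ∈ range n | t < (π i).2.1} • (⌊t⌋ + 1) := (nsmul_eq_mul _ _).symm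
    _ ≤ ∑ i ∈ range n with t < (π i).2.1, (π i).2.1 :=
        card_nsmul_le_sum _ _ _ fun _ hi =>
          Int.add_one_le_of_lt (Int.floor_lt.2 (mem_filter.1 hi).2)
    _ ≤ EL π n := sum_le_sum_of_subset_of_nonneg (filter_subset _ _) fun _ _ _ => hw _

lemma eventually_many_light (π : ℕ → WEdge α) (hw : ∀ i, 0 ≤ (π i).2.1) {t : ℚ} (ht : 0 ≤ t)
    (hmp : LimsupLE (MP π) t) :
    ∀ᶠ n in atTop, (⌊t⌋ + 1 - t) / (2 * (t + 1)) * n ≤ #{i ∈ range n | ((π i).2.1 : ℚ) ≤ t} := by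
  set tl : ℚ := ⌊t⌋ + 1 - t
  have htl_pos : 0 < tl := by linarith [Int.lt_floor_add_one t]
  have htl_le : tl ≤ 1 := by linarith [Int.floor_le t]
  obtain ⟨N, hN⟩ := hmp (tl / 2) (half_pos htl_pos)
  filter_upwards [eventually_ge_atTop (max N 1)] with n hn
  have hn_pos : (0 : ℚ) < n := by exact_mod_cast (le_of_max_le_right hn)
  have hEL : (EL π n : ℚ) ≤ (t + tl / 2) * n :=
    (div_le_iff₀ hn_pos).1 (hN n (le_of_max_le_left hn))
  have hheavy : (#{i ∈ range n | t < (π i).2.1} : ℚ) * (t + tl) ≤ EL π n := by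
    have := card_heavy_mul_le_EL π hw t n
    have htl : t + tl = ⌊t⌋ + 1 := by ring
    rw [htl]; exact_mod_cast this
  have hsplit :
      (#{i ∈ range n | ((π i).2.1 : ℚ) ≤ t} : ℚ) + #{i ∈ range n | t < (π i).2.1} = n := by
    have := card_filter_add_card_filter_not (s := range n) (fun i => ((π i).2.1 : ℚ) ≤ t)
    simp only [not_le, card_range] at this
    exact_mod_cast this
  rw [div_mul_eq_mul_div, div_le_iff₀ (by positivity)]
  nlinarith

end MeanPayoff

section ExpandedGame

variable {S : Type*} {G : Game S} {t : ℚ}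

lemma weight_nonneg_of_mem_ExpE (ht : 0 ≤ t) {e : WEdge (Conf S)} (he : e ∈ ExpE G t) :
    0 ≤ e.2.1 := by
  have : 0 ≤ ⌈t⌉ := Int.ceil_nonneg ht
  rcases he with ⟨_, _, _, _, c', -, -, rfl⟩ | ⟨_, _, _, _, -, -, rfl⟩ | rfl <;> dsimp <;> omega

lemma target_mem_ConfLE_of_mem_ExpE {e : WEdge (Conf S)} (he : e ∈ ExpE G t)
    (hw : (e.2.1 : ℚ) ≤ t) : e.2.2 ∈ ConfLE t := by
  rcases he with ⟨_, _, _, s', c', -, -, rfl⟩ | ⟨_, _, _, _, -, -, rfl⟩ | rfl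
  · exact ⟨s', c', rfl, hw⟩
  all_goals
    push_cast at hw
    linarith [Int.le_ceil t]

variable (S) [Fintype S]

def confLEFinset (t : ℚ) : Finset (Conf S) :=
  (univ ×ˢ range (⌊t⌋₊ + 1)).map Function.Embedding.some

variable {S}

lemma mem_confLEFinset (ht : 0 ≤ t) {γ : Conf S} : γ ∈ confLEFinset S t ↔ γ ∈ ConfLE t := by
  simp [confLEFinset, ConfLE, Nat.le_floor_iff ht, eq_comm, and_comm]

lemma card_confLEFinset_le (ht : 0 ≤ t) :
    (#(confLEFinset S t) : ℚ) ≤ Fintype.card S * (t + 1) :=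
  calc (#(confLEFinset S t) : ℚ) = Fintype.card S * (⌊t⌋₊ + 1 : ℕ) := by
        rw [confLEFinset, card_map, card_product, card_univ, card_range, Nat.cast_mul]
    _ ≤ Fintype.card S * (t + 1) := by
        push_cast
        gcongr
        exact Nat.floor_le ht

lemma card_light_le_card_visits_confLEFinset [DecidableEq S] (ht : 0 ≤ t)
    {π : ℕ → WEdge (Conf S)} (hE : ∀ i, π i ∈ ExpE G t) (s0 : Conf S) (n : ℕ) :
    #{i ∈ range n | ((π i).2.1 : ℚ) ≤ t} ≤ #{j ∈ Ioc 0 n | StAt s0 π j ∈ confLEFinset S t} := by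
  refine card_le_card_of_injOn (· + 1) (fun i hi => ?_) (add_left_injective 1).injOn
  obtain ⟨hin, hlight⟩ := mem_filter.1 hi
  refine mem_filter.2 ⟨mem_Ioc.2 ⟨i.succ_pos, mem_range.1 hin⟩, ?_⟩
  exact (mem_confLEFinset ht).2 (target_mem_ConfLE_of_mem_ExpE (hE i) hlight)

end ExpandedGame

lemma densityIn_singleton {S : Type*} [DecidableEq S] (γ s0 : Conf S)
    (π : ℕ → WEdge (Conf S)) (n n' : ℕ) :
    densityIn {γ} s0 π n n' = (#{j ∈ Ioc n n' | StAt s0 π j = γ} : ℚ) / (n' - n : ℕ) := by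
  have hwindow : {i | n + 1 ≤ i ∧ i ≤ n' ∧ StAt s0 π i ∈ ({γ} : Set (Conf S))} =
      ({j ∈ Ioc n n' | StAt s0 π j = γ} : Finset ℕ) := by
    ext j
    simp only [coe_filter, mem_Ioc, Set.mem_singleton_iff, Nat.lt_iff_add_one_le, and_assoc]
  rw [densityIn, hwindow, Set.ncard_coe_finset]

/-- For every play `π` of the expanded game `G'` from `(s_init, 0)` with
`MPsup(π) ≤ t`, there exists a configuration `γ ∈ Γ^{≤t}` such that for every `n` there
are infinitely many `n' ≥ n` with `density({γ}, π_{[n,n']}) ≥ t̃ / (4(t+1)²|S|)`,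
where `t̃ = ⌊t⌋ + 1 − t`. -/
theorem statement3 {S : Type} [Fintype S] (G : Game S) (sinit : S) (t : ℚ) (ht : 0 ≤ t)
    (π : ℕ → WEdge (Conf S))
    (hplay : IsPlay (ExpE G t) (some (sinit, 0)) π)
    (hmp : LimsupLE (MP π) t) :
    ∃ γ ∈ ConfLE (S := S) t, ∀ n : ℕ,
      {n' | n ≤ n' ∧
        ((⌊t⌋ : ℚ) + 1 - t) / (4 * (t + 1) ^ 2 * (Fintype.card S : ℚ)) ≤
          densityIn {γ} (some (sinit, 0)) π n n'}.Infinite := by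
  classical
  set tl : ℚ := ⌊t⌋ + 1 - t
  have htl : 0 < tl := by linarith [Int.lt_floor_add_one t]
  have hcard : (0 : ℚ) < Fintype.card S := by
    have : Nonempty S := ⟨sinit⟩
    exact_mod_cast Fintype.card_pos
  have hE : ∀ i, π i ∈ ExpE G t := hplay.1
  have hsmall : #(confLEFinset S t) * (tl / (4 * (t + 1) ^ 2 * Fintype.card S)) <
      tl / (2 * (t + 1)) :=
    calc #(confLEFinset S t) * (tl / (4 * (t + 1) ^ 2 * Fintype.card S))
        ≤ Fintype.card S * (t + 1) * (tl / (4 * (t + 1) ^ 2 * Fintype.card S)) := by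
          gcongr
          exact card_confLEFinset_le ht
      _ = tl / (4 * (t + 1)) := by field_simp
      _ < tl / (2 * (t + 1)) := by gcongr; linarith
  have hvisits : ∀ᶠ n in atTop, tl / (2 * (t + 1)) * n ≤
      #{j ∈ Ioc 0 n | StAt (some (sinit, 0)) π j ∈ confLEFinset S t} := by
    filter_upwards [eventually_many_light π (fun i => weight_nonneg_of_mem_ExpE ht (hE i)) ht hmp]
      with n hn
    exact hn.trans (by exact_mod_cast card_light_le_card_visits_confLEFinset ht hE _ n)
  obtain ⟨γ, hγ, hdense⟩ :=
    exists_frequently_dense _ _ (by positivity) hsmall hvisits.frequently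
  refine ⟨γ, (mem_confLEFinset ht).1 hγ, fun n => ?_⟩
  simpa only [densityIn_singleton] using hdense n

end AvgEnergy
end

section
/- If T is a finite good strategy tree for the expanded game G' with root labelled (s_root, c_root), then the induced strategy σ_T is a winning strategy for P₀ from (s_root, c_root) in G' for the mean-payoff objective MP(t), i.e., every outcome π of σ_T from (s_root, c_root) satisfies MPsup(π) ≤ t. -/
namespace AvgEnergy

variable {S : Type*}

/-- A finite strategy tree for the expanded game `G'` (with threshold `t`):
a finite labelled tree with at least two nodes, given by a parent function and a depth
function, whose nodes are labelled with configurations `(s,c) ∈ S × ℕ`, such that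
* every child `m` of a node `n` corresponds to an edge
  `((lab n), (lab m).2, (lab m))` of `G'`;
* every internal node labelled by a `P₀`-configuration has exactly one child;
* every internal node labelled by a `P₁`-configuration has exactly one child per
  outgoing edge of `G'` from that configuration;
* every leaf `n` has a backward edge `back n = some n'` to a strict ancestor `n'`
  carrying the same label, and `back` is defined only at leaves. -/
structure StratTree (G : Game S) (t : ℚ) where
  N : Type
  finN : Finite N
  root : N
  parent : N → N
  lab : N → S × ℕ
  back : N → Option N
  depth : N → ℕ
  two_le : 2 ≤ Nat.card N
  parent_root : parent root = root
  depth_root : depth root = 0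
  depth_parent : ∀ n, n ≠ root → depth n = depth (parent n) + 1
  reach : ∀ n, parent^[depth n] n = root
  child_edge : ∀ n m, m ≠ root → parent m = n →
    (some (lab n), ((lab m).2 : ℤ), some (lab m)) ∈ ExpE G t
  p0_child : ∀ n, (∃ m, m ≠ root ∧ parent m = n) → (lab n).1 ∈ G.S0 →
    ∃! m, m ≠ root ∧ parent m = n
  p1_child : ∀ n, (∃ m, m ≠ root ∧ parent m = n) → (lab n).1 ∈ G.S1 →
    ∀ (w : ℤ) (γ' : Conf S), (some (lab n), w, γ') ∈ ExpE G t →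
      ∃! m, (m ≠ root ∧ parent m = n) ∧ some (lab m) = γ'
  leaf_back : ∀ n, (¬ ∃ m, m ≠ root ∧ parent m = n) →
    ∃ n', back n = some n' ∧ lab n' = lab n ∧ depth n' < depth n ∧
      parent^[depth n - depth n'] n = n'
  back_leaf : ∀ n, back n ≠ none → ¬ ∃ m, m ≠ root ∧ parent m = n

variable {G : Game S} {t : ℚ}

/-- `m` is a successor of `n` in the graph `G_T`: a child of `n` if `n` is internal,
and a child of the back-target of `n` if `n` is a leaf. -/
def Succs (T : StratTree G t) (n m : T.N) : Prop :=
  ((∃ m', m' ≠ T.root ∧ T.parent m' = n) ∧ m ≠ T.root ∧ T.parent m = n) ∨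
  ((¬ ∃ m', m' ≠ T.root ∧ T.parent m' = n) ∧
    ∃ n', T.back n = some n' ∧ m ≠ T.root ∧ T.parent m = n')

/-- The token of the memory structure `G_T` is at node `n` after the play prefix `ρ`. -/
inductive Tracks (T : StratTree G t) : List (WEdge (Conf S)) → T.N → Prop
  | nil : Tracks T [] T.root
  | step {ρ : List (WEdge (Conf S))} {n m : T.N} :
      Tracks T ρ n → Succs T n m →
      Tracks T (ρ ++ [(some (T.lab n), ((T.lab m).2 : ℤ), some (T.lab m))]) m

/-- `σ` is the strategy `σ_T` induced by the strategy tree `T`: a strategy of `P₀`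
from `lab root` which, on every play prefix tracked to a node `n` with `P₀`-label,
follows a successor of `n` in `G_T`. -/
def InducedBy (T : StratTree G t) (σ : List (WEdge (Conf S)) → WEdge (Conf S)) : Prop :=
  IsStrategy (ExpE G t) (ExpS0 G) (some (T.lab T.root)) σ ∧
  ∀ ρ n, Tracks T ρ n → (T.lab n).1 ∈ G.S0 →
    ∃ m, Succs T n m ∧ σ ρ = (some (T.lab n), ((T.lab m).2 : ℤ), some (T.lab m))

/-- The strategy tree `T` is good: for every backward edge `n ⇢ n'`, the downward path
`ρ` from `n'` to `n` (of length `depth n − depth n'`), with configuration labels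
`(s_j, c_j)`, satisfies `(1/|ρ|) Σ_{j=1}^{|ρ|} c_j ≤ t`. -/
def GoodTree (T : StratTree G t) : Prop :=
  ∀ n n', T.back n = some n' →
    (∑ j ∈ Finset.range (T.depth n - T.depth n'), ((T.lab (T.parent^[j] n)).2 : ℚ)) /
      ((T.depth n - T.depth n' : ℕ) : ℚ) ≤ t

end AvgEnergy

namespace AvgEnergy

section Aux

variable {S : Type} {G : Game S} {t : ℚ} {T : StratTree G t}

lemma ne_root_of_parent {m n : T.N} (h1 : m ≠ T.root) (_ : T.parent m = n) :
    0 < T.depth m := by rw [T.depth_parent m h1]; omega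

lemma eq_root_of_depth_zero {n : T.N} (h : T.depth n = 0) : n = T.root := by
  by_contra hn
  have := T.depth_parent n hn
  omega

lemma depth_iterate (n : T.N) : ∀ j, j ≤ T.depth n →
    T.depth (T.parent^[j] n) = T.depth n - j := by
  intro j
  induction j with
  | zero => intro _; simp
  | succ j ih =>
    intro hj
    have hj' : j ≤ T.depth n := by omega
    have hx := ih hj'
    have hxne : T.parent^[j] n ≠ T.root := by
      intro h
      rw [h, T.depth_root] at hx
      omega
    have := T.depth_parent _ hxne
    rw [Function.iterate_succ_apply']
    omega

/-- Full specification of a back edge: same label, strictly smaller depth,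
ancestor, and the back-target is internal. -/
lemma back_spec {n n' : T.N} (hb : T.back n = some n') :
    T.lab n' = T.lab n ∧ T.depth n' < T.depth n ∧
      T.parent^[T.depth n - T.depth n'] n = n' ∧
      (∃ m, m ≠ T.root ∧ T.parent m = n') := by
  have hleaf : ¬ ∃ m, m ≠ T.root ∧ T.parent m = n :=
    T.back_leaf n (by rw [hb]; exact Option.some_ne_none n')
  obtain ⟨n'', hb'', hlab, hdep, hit⟩ := T.leaf_back n hleaf
  have hnn : n' = n'' := by rw [hb] at hb''; exact Option.some_inj.mp hb''
  subst hnn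
  refine ⟨hlab, hdep, hit, ?_⟩
  set k := T.depth n - T.depth n' with hk
  have hk1 : 1 ≤ k := by omega
  obtain ⟨j, hj⟩ : ∃ j, k = j + 1 := ⟨k - 1, by omega⟩
  refine ⟨T.parent^[j] n, ?_, ?_⟩
  · intro h
    have hd : T.depth (T.parent^[j] n) = T.depth n - j :=
      depth_iterate n j (by omega)
    rw [h, T.depth_root] at hd
    omega
  · have hstep : T.parent (T.parent^[j] n) = T.parent^[j+1] n :=
      (Function.iterate_succ_apply' _ _ _).symm
    rw [hstep, ← hj, hit]

/-- Any successor in `G_T` gives an edge of `G'`. -/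
lemma succs_edge_mem {n m : T.N} (h : Succs T n m) :
    (some (T.lab n), ((T.lab m).2 : ℤ), some (T.lab m)) ∈ ExpE G t := by
  rcases h with ⟨_, hm1, hm2⟩ | ⟨_, n', hb, hm1, hm2⟩
  · exact T.child_edge n m hm1 hm2
  · have hlab := (back_spec hb).1
    have := T.child_edge n' m hm1 hm2
    rwa [hlab] at this

/-- Two successors of the same node carrying the same label coincide. -/
lemma succs_unique {n m m' : T.N} (h : Succs T n m) (h' : Succs T n m')
    (hl : T.lab m = T.lab m') : m = m' := by
  have key : ∀ ne : T.N, T.lab ne = T.lab n →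
      m ≠ T.root → T.parent m = ne → m' ≠ T.root → T.parent m' = ne → m = m' := by
    intro ne hlab hm1 hm2 hm1' hm2'
    have hInt : ∃ x, x ≠ T.root ∧ T.parent x = ne := ⟨m, hm1, hm2⟩
    have hcov : (T.lab ne).1 ∈ G.S0 ∪ G.S1 := by
      rw [G.cover]; trivial
    rcases hcov with h0 | h1
    · obtain ⟨u, _, hu⟩ := T.p0_child ne hInt h0
      rw [hu m ⟨hm1, hm2⟩, hu m' ⟨hm1', hm2'⟩]
    · have hedge := T.child_edge ne m hm1 hm2
      obtain ⟨u, _, hu⟩ := T.p1_child ne hInt h1 ((T.lab m).2 : ℤ) (some (T.lab m)) hedge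
      rw [hu m ⟨⟨hm1, hm2⟩, rfl⟩, hu m' ⟨⟨hm1', hm2'⟩, by rw [hl]⟩]
  rcases h with ⟨hI, hm1, hm2⟩ | ⟨hI, n', hb, hm1, hm2⟩
  · rcases h' with ⟨_, hm1', hm2'⟩ | ⟨hI', _⟩
    · exact key n rfl hm1 hm2 hm1' hm2'
    · exact absurd hI hI'
  · rcases h' with ⟨hI', _⟩ | ⟨_, n'', hb', hm1', hm2'⟩
    · exact absurd hI' hI
    · have : n' = n'' := by rw [hb] at hb'; exact Option.some_inj.mp hb'
      subst this
      exact key n' (back_spec hb).1 hm1 hm2 hm1' hm2'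

lemma tracks_cases {ρ : List (WEdge (Conf S))} {n : T.N} (h : Tracks T ρ n) :
    (ρ = [] ∧ n = T.root) ∨
    ∃ ρ' n', Tracks T ρ' n' ∧ Succs T n' n ∧
      ρ = ρ' ++ [(some (T.lab n'), ((T.lab n).2 : ℤ), some (T.lab n))] := by
  cases h with
  | nil => exact Or.inl ⟨rfl, rfl⟩
  | step h1 h2 => exact Or.inr ⟨_, _, h1, h2, rfl⟩

lemma tracks_unique : ∀ {ρ : List (WEdge (Conf S))} {n n' : T.N},
    Tracks T ρ n → Tracks T ρ n' → n = n' := by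
  intro ρ
  induction ρ using List.reverseRecOn with
  | nil =>
    intro n n' h h'
    rcases tracks_cases h with ⟨_, rfl⟩ | ⟨_, _, _, _, he⟩
    · rcases tracks_cases h' with ⟨_, rfl⟩ | ⟨_, _, _, _, he'⟩
      · rfl
      · exact absurd he'.symm (List.append_ne_nil_of_right_ne_nil _ (by simp))
    · exact absurd he.symm (List.append_ne_nil_of_right_ne_nil _ (by simp))
  | append_singleton ρ e ih =>
    intro n n' h h'
    rcases tracks_cases h with ⟨he, _⟩ | ⟨ρ₁, n₁, h1, hs1, heq1⟩
    · exact absurd he (List.append_ne_nil_of_right_ne_nil _ (by simp))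
    rcases tracks_cases h' with ⟨he, _⟩ | ⟨ρ₂, n₂, h2, hs2, heq2⟩
    · exact absurd he (List.append_ne_nil_of_right_ne_nil _ (by simp))
    have hρ1 : ρ₁ = ρ := by
      have := congrArg List.dropLast heq1.symm
      simpa using this
    have hρ2 : ρ₂ = ρ := by
      have := congrArg List.dropLast heq2.symm
      simpa using this
    subst hρ1; subst hρ2
    have hn12 : n₁ = n₂ := ih h1 h2
    subst hn12
    have hee : (some (T.lab n₁), ((T.lab n).2 : ℤ), some (T.lab n)) =
        (some (T.lab n₁), ((T.lab n').2 : ℤ), some (T.lab n')) := by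
      have e1 := congrArg (fun l => l.getLast?) heq1
      have e2 := congrArg (fun l => l.getLast?) heq2
      simp only [List.getLast?_concat, Option.some_inj] at e1 e2
      exact e1.symm.trans e2
    have hlab : T.lab n = T.lab n' := by
      have := congrArg (fun x => x.2.2) hee
      simpa using this
    exact succs_unique hs1 hs2 hlab

lemma tracks_endSt {ρ : List (WEdge (Conf S))} {n : T.N} (h : Tracks T ρ n) :
    EndSt (some (T.lab T.root)) ρ = some (T.lab n) := by
  induction h with
  | nil => simp [EndSt]
  | step _ _ _ => simp [EndSt, List.getLast?_concat]

lemma succs_exists {n : T.N} (hS0 : (T.lab n).1 ∈ G.S0) : ∃ m, Succs T n m := by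
  by_cases hI : ∃ m, m ≠ T.root ∧ T.parent m = n
  · obtain ⟨m, hm, _⟩ := T.p0_child n hI hS0
    exact ⟨m, Or.inl ⟨hI, hm⟩⟩
  · obtain ⟨n', hb, _, _, hit⟩ := T.leaf_back n hI
    obtain ⟨_, _, _, m, hm1, hm2⟩ := back_spec hb
    exact ⟨m, Or.inr ⟨hI, n', hb, hm1, hm2⟩⟩

/-- Totality of the expanded game. -/
lemma exp_total (G : Game S) (t : ℚ) (γ : Conf S) :
    ∃ e, e ∈ ExpE G t ∧ e.1 = γ := by
  cases γ with
  | none => exact ⟨(none, ⌈t⌉ + 1, none), Or.inr (Or.inr rfl), rfl⟩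
  | some p =>
    obtain ⟨s, c⟩ := p
    obtain ⟨w, s', hE⟩ := G.total s
    by_cases h0 : 0 ≤ (c : ℤ) + w
    · refine ⟨(some (s, c), (((c : ℤ) + w).toNat : ℤ), some (s', ((c : ℤ) + w).toNat)),
        Or.inl ⟨s, c, w, s', ((c : ℤ) + w).toNat, hE, ?_, rfl⟩, rfl⟩
      exact (Int.toNat_of_nonneg h0).symm
    · exact ⟨(some (s, c), ⌈t⌉ + 1, none),
        Or.inr (Or.inl ⟨s, c, w, s', hE, by omega, rfl⟩), rfl⟩

open Classical in
/-- The strategy induced by a strategy tree. -/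
noncomputable def sigmaT (T : StratTree G t) : List (WEdge (Conf S)) → WEdge (Conf S) :=
  fun ρ =>
    if h : ∃ p : T.N × T.N, Tracks T ρ p.1 ∧ Succs T p.1 p.2 then
      (some (T.lab h.choose.1), ((T.lab h.choose.2).2 : ℤ), some (T.lab h.choose.2))
    else (exp_total G t (EndSt (some (T.lab T.root)) ρ)).choose

lemma sigmaT_spec {ρ : List (WEdge (Conf S))} {n : T.N} (htr : Tracks T ρ n)
    (hex : ∃ m, Succs T n m) :
    ∃ m, Succs T n m ∧
      sigmaT T ρ = (some (T.lab n), ((T.lab m).2 : ℤ), some (T.lab m)) := by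
  have h : ∃ p : T.N × T.N, Tracks T ρ p.1 ∧ Succs T p.1 p.2 :=
    ⟨(n, hex.choose), htr, hex.choose_spec⟩
  have hcs := h.choose_spec
  have h1 : h.choose.1 = n := tracks_unique hcs.1 htr
  refine ⟨h.choose.2, h1 ▸ hcs.2, ?_⟩
  simp only [sigmaT]
  rw [dif_pos h, h1]

lemma induced (T : StratTree G t) : InducedBy T (sigmaT T) := by
  constructor
  · intro ρ _ _
    by_cases h : ∃ p : T.N × T.N, Tracks T ρ p.1 ∧ Succs T p.1 p.2
    · obtain ⟨htr, hsucc⟩ := h.choose_spec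
      simp only [sigmaT]
      rw [dif_pos h]
      exact ⟨succs_edge_mem hsucc, by rw [tracks_endSt htr]⟩
    · simp only [sigmaT]
      rw [dif_neg h]
      exact (exp_total G t _).choose_spec
  · intro ρ n htr hS0
    exact sigmaT_spec htr (succs_exists hS0)

/-- Invariant: the configuration at position `k` of a play equals the end state
of its length-`k` prefix. -/
lemma pref_succ {π : ℕ → WEdge (Conf S)} (k : ℕ) :
    Pref π (k + 1) = Pref π k ++ [π k] := by
  rw [Pref, List.ofFn_succ']
  simp [Pref, List.concat_eq_append]

lemma play_head {E : Set (WEdge (Conf S))} {s : Conf S} {π : ℕ → WEdge (Conf S)}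
    (hp : IsPlay E s π) : ∀ k, (π k).1 = EndSt s (Pref π k) := by
  intro k
  cases k with
  | zero => simp [Pref, EndSt, hp.2.1]
  | succ k =>
    rw [pref_succ]
    simp [EndSt, List.getLast?_concat, (hp.2.2 k).symm]

/-- Key step: along any outcome of `σ_T`, the tracked node advances by a successor. -/
lemma outcome_step {π : ℕ → WEdge (Conf S)}
    (hout : IsOutcome (ExpE G t) (ExpS0 G) (some (T.lab T.root)) (sigmaT T) π)
    {k : ℕ} {ν : T.N} (htr : Tracks T (Pref π k) ν) :
    ∃ m, Succs T ν m ∧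
      π k = (some (T.lab ν), ((T.lab m).2 : ℤ), some (T.lab m)) := by
  have hend : EndSt (some (T.lab T.root)) (Pref π k) = some (T.lab ν) :=
    tracks_endSt htr
  have hcov : (T.lab ν).1 ∈ G.S0 ∪ G.S1 := by rw [G.cover]; trivial
  rcases hcov with h0 | h1
  · -- P₀ node: the outcome follows σ_T
    have hmem : EndSt (some (T.lab T.root)) (Pref π k) ∈ ExpS0 G := by
      rw [hend]
      exact ⟨(T.lab ν).1, (T.lab ν).2, h0, rfl⟩
    have hπ := hout.2 k hmem
    obtain ⟨m, hs, hσ⟩ := sigmaT_spec htr (succs_exists h0)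
    exact ⟨m, hs, by rw [hπ, hσ]⟩
  · -- P₁ node
    have hmemE : π k ∈ ExpE G t := hout.1.1 k
    have hsrc : (π k).1 = some (T.lab ν) := by rw [play_head hout.1 k, hend]
    -- effective internal node
    have key : ∃ ne : T.N, T.lab ne = T.lab ν ∧
        (∃ m0, m0 ≠ T.root ∧ T.parent m0 = ne) ∧
        ∀ m, m ≠ T.root → T.parent m = ne → Succs T ν m := by
      by_cases hI : ∃ m0, m0 ≠ T.root ∧ T.parent m0 = ν
      · exact ⟨ν, rfl, hI, fun m h1 h2 => Or.inl ⟨hI, h1, h2⟩⟩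
      · obtain ⟨n', hb, _, _, _⟩ := T.leaf_back ν hI
        obtain ⟨hlab, _, _, hInt⟩ := back_spec hb
        exact ⟨n', hlab, hInt, fun m h1 h2 => Or.inr ⟨hI, n', hb, h1, h2⟩⟩
    obtain ⟨ne, hlabne, hInt, hmk⟩ := key
    have h1' : (T.lab ne).1 ∈ G.S1 := by rw [hlabne]; exact h1
    rcases hmemE with ⟨s, c, w, s', c', hE, hsum, heq⟩ | ⟨s, c, w, s', hE, hneg, heq⟩ | heq
    · have hsc : (s, c) = T.lab ν := by
        rw [heq] at hsrc
        exact Option.some_inj.mp hsrc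
      have hedge : (some (T.lab ne), (c' : ℤ), some (s', c')) ∈ ExpE G t := by
        rw [hlabne, ← hsc]
        exact Or.inl ⟨s, c, w, s', c', hE, hsum, rfl⟩
      obtain ⟨m, ⟨⟨hm1, hm2⟩, hlabm⟩, _⟩ := T.p1_child ne hInt h1' (c' : ℤ) (some (s', c')) hedge
      have hlm : T.lab m = (s', c') := Option.some_inj.mp hlabm
      refine ⟨m, hmk m hm1 hm2, ?_⟩
      rw [heq, hsc, hlm]
    · have hsc : (s, c) = T.lab ν := by
        rw [heq] at hsrc
        exact Option.some_inj.mp hsrc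
      have hedge : (some (T.lab ne), ⌈t⌉ + 1, (none : Conf S)) ∈ ExpE G t := by
        rw [hlabne, ← hsc]
        exact Or.inr (Or.inl ⟨s, c, w, s', hE, hneg, rfl⟩)
      obtain ⟨m, ⟨_, hlabm⟩, _⟩ := T.p1_child ne hInt h1' (⌈t⌉ + 1) none hedge
      exact absurd hlabm (by simp)
    · rw [heq] at hsrc
      exact absurd hsrc (by simp)

/-- The sum of the counters along the path from a node to the root (excluding root). -/
noncomputable def Phi (T : StratTree G t) (ν : T.N) : ℚ :=
  ∑ j ∈ Finset.range (T.depth ν), ((T.lab (T.parent^[j] ν)).2 : ℚ)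

lemma phi_child {m n : T.N} (hm1 : m ≠ T.root) (hm2 : T.parent m = n) :
    Phi T m = ((T.lab m).2 : ℚ) + Phi T n := by
  have hd : T.depth m = T.depth n + 1 := by rw [T.depth_parent m hm1, hm2]
  rw [Phi, Phi, hd, Finset.sum_range_succ']
  have hit : ∀ j : ℕ, T.parent^[j + 1] m = T.parent^[j] n := by
    intro j
    rw [Function.iterate_succ_apply, hm2]
  simp only [hit, Function.iterate_zero_apply]
  ring

lemma good_phi (hgood : GoodTree T) {n n' : T.N} (hb : T.back n = some n') :
    Phi T n ≤ t * ((T.depth n : ℚ) - (T.depth n' : ℚ)) + Phi T n' := by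
  obtain ⟨hlab, hdep, hit, _⟩ := back_spec hb
  set k := T.depth n - T.depth n' with hk
  have hkpos : 0 < k := by omega
  have hsplit : T.depth n = k + T.depth n' := by omega
  have hPhi : Phi T n =
      (∑ j ∈ Finset.range k, ((T.lab (T.parent^[j] n)).2 : ℚ)) + Phi T n' := by
    rw [Phi, hsplit, Finset.sum_range_add]
    congr 1
    rw [Phi]
    apply Finset.sum_congr rfl
    intro j _
    congr 2
    rw [add_comm k j, Function.iterate_add_apply, hit]
  have hg := hgood n n' hb
  rw [← hk] at hg
  have hkQ : (0 : ℚ) < (k : ℚ) := by exact_mod_cast hkpos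
  rw [div_le_iff₀ hkQ] at hg
  have hcast : ((k : ℕ) : ℚ) = (T.depth n : ℚ) - (T.depth n' : ℚ) := by
    rw [hk]
    push_cast [Nat.cast_sub (le_of_lt hdep)]
    ring
  rw [hPhi]
  calc (∑ j ∈ Finset.range k, ((T.lab (T.parent^[j] n)).2 : ℚ)) + Phi T n'
      ≤ t * (k : ℚ) + Phi T n' := by linarith
    _ = t * ((T.depth n : ℚ) - (T.depth n' : ℚ)) + Phi T n' := by rw [hcast]

/-- Main invariant along an outcome of `σ_T`. -/
lemma main_invariant (hgood : GoodTree T) {π : ℕ → WEdge (Conf S)}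
    (hout : IsOutcome (ExpE G t) (ExpS0 G) (some (T.lab T.root)) (sigmaT T) π) :
    ∀ k, ∃ ν, Tracks T (Pref π k) ν ∧
      (EL π k : ℚ) ≤ t * ((k : ℚ) - (T.depth ν : ℚ)) + Phi T ν := by
  intro k
  induction k with
  | zero =>
    refine ⟨T.root, ?_, ?_⟩
    · have : Pref π 0 = ([] : List (WEdge (Conf S))) := by simp [Pref]
      rw [this]
      exact Tracks.nil
    · simp [EL, Phi, T.depth_root]
  | succ k ih =>
    obtain ⟨ν, htr, hle⟩ := ih
    obtain ⟨m, hs, hedge⟩ := outcome_step hout htr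
    have htr' : Tracks T (Pref π (k + 1)) m := by
      rw [pref_succ, hedge]
      exact Tracks.step htr hs
    refine ⟨m, htr', ?_⟩
    have hEL : (EL π (k + 1) : ℚ) = (EL π k : ℚ) + ((T.lab m).2 : ℚ) := by
      rw [EL, EL, Finset.sum_range_succ]
      push_cast
      rw [hedge]
      simp
    rcases hs with ⟨_, hm1, hm2⟩ | ⟨_, n', hb, hm1, hm2⟩
    · have hd : T.depth m = T.depth ν + 1 := by rw [T.depth_parent m hm1, hm2]
      have hp := phi_child hm1 hm2
      rw [hEL, hp, hd]
      push_cast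
      linarith
    · have hgp := good_phi hgood hb
      have hd : T.depth m = T.depth n' + 1 := by rw [T.depth_parent m hm1, hm2]
      have hp := phi_child hm1 hm2
      rw [hEL, hp, hd]
      push_cast
      linarith

end Aux

/-- If `T` is a finite good strategy tree for the expanded game `G'`
with root labelled `(s_root, c_root)`, then the induced strategy `σ_T` is a winning
strategy for `P₀` from `(s_root, c_root)` in `G'` for the mean-payoff objective `MP(t)`:
every outcome `π` of `σ_T` from `(s_root, c_root)` satisfies `MPsup(π) ≤ t`. -/
theorem statement8 {S : Type} [Fintype S] (G : Game S) (t : ℚ)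
    (T : StratTree G t) (hgood : GoodTree T) :
    ∃ σ, InducedBy T σ ∧
      ∀ π, IsOutcome (ExpE G t) (ExpS0 G) (some (T.lab T.root)) σ π →
        LimsupLE (MP π) t := by
  refine ⟨sigmaT T, induced T, ?_⟩
  intro π hout
  have := T.finN
  have : Fintype T.N := Fintype.ofFinite _
  have hNE : Nonempty T.N := ⟨T.root⟩
  set C : ℚ := Finset.univ.sup' Finset.univ_nonempty
    (fun ν : T.N => Phi T ν - t * (T.depth ν : ℚ)) with hCdef
  have hC : ∀ ν : T.N, Phi T ν - t * (T.depth ν : ℚ) ≤ C :=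
    fun ν => Finset.le_sup' (fun ν : T.N => Phi T ν - t * (T.depth ν : ℚ))
      (Finset.mem_univ ν)
  set C' : ℚ := max C 0 with hC'def
  have hC'0 : 0 ≤ C' := le_max_right _ _
  have hEL : ∀ k : ℕ, (EL π k : ℚ) ≤ t * (k : ℚ) + C' := by
    intro k
    obtain ⟨ν, _, h⟩ := main_invariant hgood hout k
    have h1 := hC ν
    have h2 : C ≤ C' := le_max_left _ _
    nlinarith
  intro ε hε
  refine ⟨⌈C' / ε⌉₊ + 1, ?_⟩
  intro n hn
  have hn1 : 1 ≤ n := le_trans (by omega) hn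
  have hnQ : (0 : ℚ) < (n : ℚ) := by exact_mod_cast hn1
  have hceil : C' / ε ≤ ((⌈C' / ε⌉₊ + 1 : ℕ) : ℚ) := by
    push_cast
    have := Nat.le_ceil (C' / ε)
    linarith
  have hNn : ((⌈C' / ε⌉₊ + 1 : ℕ) : ℚ) ≤ (n : ℚ) := by exact_mod_cast hn
  have hCn : C' ≤ ε * (n : ℚ) := by
    have h1 : C' / ε ≤ (n : ℚ) := le_trans hceil hNn
    calc C' = (C' / ε) * ε := by field_simp
      _ ≤ (n : ℚ) * ε := by
          apply mul_le_mul_of_nonneg_right h1 (le_of_lt hε)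
      _ = ε * (n : ℚ) := by ring
  rw [MP, div_le_iff₀ hnQ]
  have := hEL n
  nlinarith

end AvgEnergy
end
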